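/- arXiv:1607.08782 — 3 statements merged into one kernel-verified Lean document; each statement's English description precedes it below -/
import Mathlib

section
/- There is a constant C > 0 such that for every n ≥ 2 the number of labelled bipartite graphs on vertex set {1,…,n}, given together with a bipartition of {1,…,n} into two independent parts, that are chain-decomposable is at most n^{C·n}. -/
universe u

/-- `X` is complete to `Y` in `G`: every vertex of `X` is adjacent to every vertex of `Y`. -/
def CompleteTo {V : Type u} (G : SimpleGraph V) (X Y : Set V) : Prop :=
  ∀ ⦃x⦄, x ∈ X → ∀ ⦃y⦄, y ∈ Y → G.Adj x y

/-- `X` is anticomplete to `Y` in `G`. -/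
def AnticompleteTo {V : Type u} (G : SimpleGraph V) (X Y : Set V) : Prop :=
  ∀ ⦃x⦄, x ∈ X → ∀ ⦃y⦄, y ∈ Y → ¬ G.Adj x y

/-- `(U, W)` is a bipartition of the vertex set of `G` into two independent sets. -/
structure IsBipartition {V : Type u} (G : SimpleGraph V) (U W : Set V) : Prop where
  union_eq : U ∪ W = Set.univ
  disjoint : Disjoint U W
  cross : ∀ ⦃x y⦄, G.Adj x y → (x ∈ U ∧ y ∈ W) ∨ (x ∈ W ∧ y ∈ U)

/-- `G` contains an induced subgraph isomorphic to `H`. -/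
def HasInducedCopy {α : Type*} {V : Type u} (H : SimpleGraph α) (G : SimpleGraph V) : Prop :=
  ∃ f : α ↪ V, ∀ a b : α, G.Adj (f a) (f b) ↔ H.Adj a b

/-- `G` has no induced subgraph isomorphic to the chordless path `P_m` on `m` vertices. -/
def PathFree (m : ℕ) {V : Type u} (G : SimpleGraph V) : Prop :=
  ¬ HasInducedCopy (SimpleGraph.pathGraph m) G

/-- `G` is bipartite: its vertex set can be partitioned into (at most) two independent sets. -/
def Bipartite {V : Type u} (G : SimpleGraph V) : Prop :=
  ∃ U W : Set V, IsBipartition G U W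

/-- The bipartite complement of `G` with respect to the parts `U` and `W`:
`u ∈ U` and `w ∈ W` are adjacent iff they are non-adjacent in `G`. -/
def bipComplOn {V : Type u} (G : SimpleGraph V) (U W : Set V) : SimpleGraph V where
  Adj x y := ((x ∈ U ∧ y ∈ W) ∨ (x ∈ W ∧ y ∈ U)) ∧ x ≠ y ∧ ¬ G.Adj x y
  symm := ⟨by
    rintro x y ⟨h1, h2, h3⟩
    exact ⟨by tauto, h2.symm, fun h => h3 h.symm⟩⟩
  loopless := ⟨by rintro x ⟨_, h, _⟩; exact h rfl⟩

/-- A `k`-chain decomposition `[(A_1,…,A_k)(B_1,…,B_k)(C_1,…,C_k)(D_1,…,D_k)]` of a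
bipartite graph `G` with ordered parts `(U, W)`.  The sets are indexed by `1, …, k`. -/
structure IsChainDecomp {V : Type u} (G : SimpleGraph V) (U W : Set V) (k : ℕ)
    (A B C D : ℕ → Set V) : Prop where
  one_le : 1 ≤ k
  /-- `A_1, …, A_k, C_1, …, C_k` cover `U`. -/
  U_eq : (⋃ i ∈ Set.Icc 1 k, A i) ∪ (⋃ i ∈ Set.Icc 1 k, C i) = U
  /-- `B_1, …, B_k, D_1, …, D_k` cover `W`. -/
  W_eq : (⋃ i ∈ Set.Icc 1 k, B i) ∪ (⋃ i ∈ Set.Icc 1 k, D i) = W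
  /-- the sets `A_1, …, A_k, C_1, …, C_k` are pairwise disjoint. -/
  disjU : ∀ i ∈ Set.Icc 1 k, ∀ j ∈ Set.Icc 1 k,
      (i ≠ j → Disjoint (A i) (A j) ∧ Disjoint (C i) (C j)) ∧ Disjoint (A i) (C j)
  /-- the sets `B_1, …, B_k, D_1, …, D_k` are pairwise disjoint. -/
  disjW : ∀ i ∈ Set.Icc 1 k, ∀ j ∈ Set.Icc 1 k,
      (i ≠ j → Disjoint (B i) (B j) ∧ Disjoint (D i) (D j)) ∧ Disjoint (B i) (D j)
  /-- for every `i ≤ k-1` the sets `A_i, B_i, C_i, D_i` are non-empty. -/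
  nonempty_of_lt : ∀ i, 1 ≤ i → i < k →
      (A i).Nonempty ∧ (B i).Nonempty ∧ (C i).Nonempty ∧ (D i).Nonempty
  /-- for `i = k`, at least one of `A_k, B_k, C_k, D_k` is non-empty. -/
  nonempty_last : (A k).Nonempty ∨ (B k).Nonempty ∨ (C k).Nonempty ∨ (D k).Nonempty
  /-- every vertex of `B_i` has a neighbour in `A_i`. -/
  B_nbr : ∀ i ∈ Set.Icc 1 k, ∀ b ∈ B i, ∃ a ∈ A i, G.Adj a b
  /-- every vertex of `D_i` has a neighbour in `C_i`. -/
  D_nbr : ∀ i ∈ Set.Icc 1 k, ∀ d ∈ D i, ∃ c ∈ C i, G.Adj c d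
  /-- for `2 ≤ i ≤ k-1`, every vertex of `A_i` has a non-neighbour in `B_{i-1}`. -/
  A_nonnbr : ∀ i, 2 ≤ i → i < k → ∀ a ∈ A i, ∃ b ∈ B (i - 1), ¬ G.Adj a b
  /-- for `2 ≤ i ≤ k-1`, every vertex of `C_i` has a non-neighbour in `D_{i-1}`. -/
  C_nonnbr : ∀ i, 2 ≤ i → i < k → ∀ c ∈ C i, ∃ d ∈ D (i - 1), ¬ G.Adj c d
  /-- `A_i` is anticomplete to `B_j` for `j > i` and complete to `B_j` for `j < i-1`. -/
  AB : ∀ i ∈ Set.Icc 1 k, ∀ j ∈ Set.Icc 1 k,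
      (i < j → AnticompleteTo G (A i) (B j)) ∧ (j + 1 < i → CompleteTo G (A i) (B j))
  /-- `C_i` is anticomplete to `D_j` for `j > i` and complete to `D_j` for `j < i-1`. -/
  CD : ∀ i ∈ Set.Icc 1 k, ∀ j ∈ Set.Icc 1 k,
      (i < j → AnticompleteTo G (C i) (D j)) ∧ (j + 1 < i → CompleteTo G (C i) (D j))
  /-- `A_i` is complete to `D_j` for `j < i` and anticomplete to `D_j` for `j ≥ i`. -/
  AD : ∀ i ∈ Set.Icc 1 k, ∀ j ∈ Set.Icc 1 k,
      (j < i → CompleteTo G (A i) (D j)) ∧ (i ≤ j → AnticompleteTo G (A i) (D j))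
  /-- `C_i` is complete to `B_j` for `j < i` and anticomplete to `B_j` for `j ≥ i`. -/
  CB : ∀ i ∈ Set.Icc 1 k, ∀ j ∈ Set.Icc 1 k,
      (j < i → CompleteTo G (C i) (B j)) ∧ (i ≤ j → AnticompleteTo G (C i) (B j))

/-- `G`, with ordered parts `(U, W)`, admits a `k`-chain decomposition for some `k ≥ 1`. -/
def HasChainDecompOriented {V : Type u} (G : SimpleGraph V) (U W : Set V) : Prop :=
  ∃ k : ℕ, ∃ A B C D : ℕ → Set V, IsChainDecomp G U W k A B C D

/-- `G` admits a chain decomposition, either with respect to `(U, W)` (left)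
or with respect to `(W, U)` (right). -/
def HasChainDecomp {V : Type u} (G : SimpleGraph V) (U W : Set V) : Prop :=
  HasChainDecompOriented G U W ∨ HasChainDecompOriented G W U

/-- A bipartite graph (given inside an ambient graph `G` by its ordered parts `(U, W)`)
is chain-decomposable if it can be totally decomposed into single vertices by repeatedly
taking connected components (of the graph or of its bipartite complement) or the two
components of a `k`-chain decomposition (`k ≥ 2`, of the graph or of its bipartite
complement) augmented with marker vertices `v₁ ∈ D_1`, `v₂ ∈ B_1`. -/
inductive ChainDecomposable {V : Type u} : SimpleGraph V → Set V → Set V → Prop where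
  /-- a graph with exactly one vertex is chain-decomposable. -/
  | single (G : SimpleGraph V) (U W : Set V) (v : V) (h : U ∪ W = {v}) :
      ChainDecomposable G U W
  /-- `G` is the disjoint union of two chain-decomposable induced bipartite subgraphs. -/
  | union (G : SimpleGraph V) (U₁ W₁ U₂ W₂ : Set V)
      (hd : Disjoint (U₁ ∪ W₁) (U₂ ∪ W₂))
      (hne₁ : (U₁ ∪ W₁).Nonempty) (hne₂ : (U₂ ∪ W₂).Nonempty)
      (hanti : AnticompleteTo G (U₁ ∪ W₁) (U₂ ∪ W₂))
      (h₁ : ChainDecomposable G U₁ W₁) (h₂ : ChainDecomposable G U₂ W₂) :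
      ChainDecomposable G (U₁ ∪ U₂) (W₁ ∪ W₂)
  /-- the bipartite complement of `G` is the disjoint union of two chain-decomposable
  induced bipartite subgraphs. -/
  | counion (G : SimpleGraph V) (U₁ W₁ U₂ W₂ : Set V)
      (hd : Disjoint (U₁ ∪ W₁) (U₂ ∪ W₂))
      (hne₁ : (U₁ ∪ W₁).Nonempty) (hne₂ : (U₂ ∪ W₂).Nonempty)
      (hanti : AnticompleteTo (bipComplOn G (U₁ ∪ U₂) (W₁ ∪ W₂)) (U₁ ∪ W₁) (U₂ ∪ W₂))
      (h₁ : ChainDecomposable (bipComplOn G (U₁ ∪ U₂) (W₁ ∪ W₂)) U₁ W₁)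
      (h₂ : ChainDecomposable (bipComplOn G (U₁ ∪ U₂) (W₁ ∪ W₂)) U₂ W₂) :
      ChainDecomposable G (U₁ ∪ U₂) (W₁ ∪ W₂)
  /-- `G` admits a left `k`-chain decomposition with `k ≥ 2` whose two components,
  augmented with the marker vertices `v₁ ∈ D_1` and `v₂ ∈ B_1`, are chain-decomposable. -/
  | chainLeft (G : SimpleGraph V) (U W : Set V) (k : ℕ) (A B C D : ℕ → Set V) (v₁ v₂ : V)
      (hk : 2 ≤ k) (hdec : IsChainDecomp G U W k A B C D)
      (hv₁ : v₁ ∈ D 1) (hv₂ : v₂ ∈ B 1)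
      (h₁ : ChainDecomposable G (⋃ i ∈ Set.Icc 1 k, A i)
        ((⋃ i ∈ Set.Icc 1 k, B i) ∪ {v₁}))
      (h₂ : ChainDecomposable G (⋃ i ∈ Set.Icc 1 k, C i)
        ((⋃ i ∈ Set.Icc 1 k, D i) ∪ {v₂})) :
      ChainDecomposable G U W
  /-- `G` admits a right `k`-chain decomposition with `k ≥ 2` whose two components,
  augmented with the marker vertices `v₁ ∈ D_1` and `v₂ ∈ B_1`, are chain-decomposable. -/
  | chainRight (G : SimpleGraph V) (U W : Set V) (k : ℕ) (A B C D : ℕ → Set V) (v₁ v₂ : V)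
      (hk : 2 ≤ k) (hdec : IsChainDecomp G W U k A B C D)
      (hv₁ : v₁ ∈ D 1) (hv₂ : v₂ ∈ B 1)
      (h₁ : ChainDecomposable G ((⋃ i ∈ Set.Icc 1 k, B i) ∪ {v₁})
        (⋃ i ∈ Set.Icc 1 k, A i))
      (h₂ : ChainDecomposable G ((⋃ i ∈ Set.Icc 1 k, D i) ∪ {v₂})
        (⋃ i ∈ Set.Icc 1 k, C i)) :
      ChainDecomposable G U W
  /-- the bipartite complement of `G` admits a left `k`-chain decomposition with `k ≥ 2`
  whose two components, augmented with the marker vertices, are chain-decomposable. -/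
  | cochainLeft (G : SimpleGraph V) (U W : Set V) (k : ℕ) (A B C D : ℕ → Set V) (v₁ v₂ : V)
      (hk : 2 ≤ k) (hdec : IsChainDecomp (bipComplOn G U W) U W k A B C D)
      (hv₁ : v₁ ∈ D 1) (hv₂ : v₂ ∈ B 1)
      (h₁ : ChainDecomposable (bipComplOn G U W) (⋃ i ∈ Set.Icc 1 k, A i)
        ((⋃ i ∈ Set.Icc 1 k, B i) ∪ {v₁}))
      (h₂ : ChainDecomposable (bipComplOn G U W) (⋃ i ∈ Set.Icc 1 k, C i)
        ((⋃ i ∈ Set.Icc 1 k, D i) ∪ {v₂})) :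
      ChainDecomposable G U W
  /-- the bipartite complement of `G` admits a right `k`-chain decomposition with `k ≥ 2`
  whose two components, augmented with the marker vertices, are chain-decomposable. -/
  | cochainRight (G : SimpleGraph V) (U W : Set V) (k : ℕ) (A B C D : ℕ → Set V) (v₁ v₂ : V)
      (hk : 2 ≤ k) (hdec : IsChainDecomp (bipComplOn G U W) W U k A B C D)
      (hv₁ : v₁ ∈ D 1) (hv₂ : v₂ ∈ B 1)
      (h₁ : ChainDecomposable (bipComplOn G U W) ((⋃ i ∈ Set.Icc 1 k, B i) ∪ {v₁})
        (⋃ i ∈ Set.Icc 1 k, A i))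
      (h₂ : ChainDecomposable (bipComplOn G U W) ((⋃ i ∈ Set.Icc 1 k, D i) ∪ {v₂})
        (⋃ i ∈ Set.Icc 1 k, C i)) :
      ChainDecomposable G U W

/-!
A chain-decomposable graph has a decomposition tree whose internal nodes are disjoint unions,
bipartite complements and chain nodes. The two sides of a chain node have at least three
vertices each and `m + 2` vertices together, so a tree for `m` vertices has `O(m)` nodes.
Labelling every node by at most two vertices and the integer `k ≤ m + 1`, the preorder word of
labels has length `O(n)` over an alphabet of size `O(n³)`, and it determines the graph: the parts
of a chain decomposition are recovered one index at a time from its two sides, its markers and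
`k` (`A 1` is the non-neighbourhood of `v₁`, `B i` the rest of `⋃ B` seeing `A i`, and `A i`
the rest of `⋃ A` missing a vertex of `B (i - 1)`), and then the indices fix every adjacency
between the two sides.
-/

open Set

variable {V : Type*}

def AdjAgreeOn (G G' : SimpleGraph V) (X Y : Set V) : Prop :=
  ∀ ⦃x⦄, x ∈ X → ∀ ⦃y⦄, y ∈ Y → (G.Adj x y ↔ G'.Adj x y)

namespace AdjAgreeOn

variable {G G' : SimpleGraph V} {X Y : Set V}

lemma symm (h : AdjAgreeOn G G' X Y) : AdjAgreeOn G' G X Y :=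
  fun _ hx _ hy => (h hx hy).symm

lemma swap (h : AdjAgreeOn G G' X Y) : AdjAgreeOn G G' Y X := fun _ hx _ hy => by
  rw [G.adj_comm, G'.adj_comm]
  exact h hy hx

lemma mono {X' Y' : Set V} (h : AdjAgreeOn G G' X Y) (hX : X' ⊆ X) (hY : Y' ⊆ Y) :
    AdjAgreeOn G G' X' Y' :=
  fun _ hx _ hy => h (hX hx) (hY hy)

lemma union {U₁ W₁ U₂ W₂ : Set V} (h₁ : AdjAgreeOn G G' U₁ W₁) (h₂ : AdjAgreeOn G G' U₂ W₂)
    (hG : AnticompleteTo G (U₁ ∪ W₁) (U₂ ∪ W₂)) (hG' : AnticompleteTo G' (U₁ ∪ W₁) (U₂ ∪ W₂)) :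
    AdjAgreeOn G G' (U₁ ∪ U₂) (W₁ ∪ W₂) := by
  rintro x (hx | hx) y (hy | hy)
  · exact h₁ hx hy
  · exact iff_of_false (hG (.inl hx) (.inr hy)) (hG' (.inl hx) (.inr hy))
  · exact iff_of_false (fun h => hG (.inr hy) (.inl hx) h.symm)
      (fun h => hG' (.inr hy) (.inl hx) h.symm)
  · exact h₂ hx hy

lemma of_bipComplOn (h : AdjAgreeOn (bipComplOn G X Y) (bipComplOn G' X Y) X Y) :
    AdjAgreeOn G G' X Y := by
  intro x hx y hy
  by_cases hxy : x = y
  · subst hxy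
    exact iff_of_false G.irrefl G'.irrefl
  · have hcross : (x ∈ X ∧ y ∈ Y) ∨ (x ∈ Y ∧ y ∈ X) := .inl ⟨hx, hy⟩
    have := h hx hy
    simp only [bipComplOn, hcross, ne_eq, hxy, not_false_eq_true, true_and] at this
    exact not_iff_not.1 this

end AdjAgreeOn

lemma IsBipartition.le_of_adjAgreeOn {G G' : SimpleGraph V} {U W : Set V}
    (h : IsBipartition G U W) (hag : AdjAgreeOn G G' U W) : G ≤ G' := by
  intro x y hxy
  rcases h.cross hxy with ⟨hx, hy⟩ | ⟨hx, hy⟩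
  · exact (hag hx hy).1 hxy
  · exact ((hag hy hx).1 hxy.symm).symm

lemma eq_of_union_singleton_eq {s t : Set V} {v : V} (hs : v ∉ s) (ht : v ∉ t)
    (h : s ∪ {v} = t ∪ {v}) : s = t := by
  rw [← insert_sdiff_self_of_notMem hs, ← insert_sdiff_self_of_notMem ht, ← union_singleton,
    ← union_singleton, h]

def partsUnion (k : ℕ) (A : ℕ → Set V) : Set V := ⋃ i ∈ Icc 1 k, A i

lemma mem_partsUnion {k : ℕ} {A : ℕ → Set V} {x : V} :
    x ∈ partsUnion k A ↔ ∃ i ∈ Icc 1 k, x ∈ A i :=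
  mem_iUnion₂.trans <| by simp only [exists_prop]

lemma subset_partsUnion {k i : ℕ} {A : ℕ → Set V} (hi : i ∈ Icc 1 k) : A i ⊆ partsUnion k A :=
  subset_biUnion_of_mem (u := A) hi

namespace IsChainDecomp

variable {G G' : SimpleGraph V} {U W U' W' : Set V} {k i j : ℕ}
  {A B C D A' B' C' D' : ℕ → Set V} {v₁ v₂ : V}

lemma swap (h : IsChainDecomp G U W k A B C D) : IsChainDecomp G U W k C D A B where
  one_le := h.one_le
  U_eq := by rw [union_comm]; exact h.U_eq
  W_eq := by rw [union_comm]; exact h.W_eq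
  disjU i hi j hj := ⟨fun hij => ((h.disjU i hi j hj).1 hij).symm, (h.disjU j hj i hi).2.symm⟩
  disjW i hi j hj := ⟨fun hij => ((h.disjW i hi j hj).1 hij).symm, (h.disjW j hj i hi).2.symm⟩
  nonempty_of_lt i h1 h2 :=
    have ⟨hA, hB, hC, hD⟩ := h.nonempty_of_lt i h1 h2
    ⟨hC, hD, hA, hB⟩
  nonempty_last := by rcases h.nonempty_last with h' | h' | h' | h' <;> simp [h']
  B_nbr := h.D_nbr
  D_nbr := h.B_nbr
  A_nonnbr := h.C_nonnbr
  C_nonnbr := h.A_nonnbr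
  AB := h.CD
  CD := h.AB
  AD := h.CB
  CB := h.AD

lemma one_mem (h : IsChainDecomp G U W k A B C D) : 1 ∈ Icc 1 k := ⟨le_rfl, h.one_le⟩

lemma partsUnion_A_subset (h : IsChainDecomp G U W k A B C D) : partsUnion k A ⊆ U :=
  h.U_eq ▸ subset_union_left

lemma partsUnion_B_subset (h : IsChainDecomp G U W k A B C D) : partsUnion k B ⊆ W :=
  h.W_eq ▸ subset_union_left

lemma disjoint_partsUnion_A_C (h : IsChainDecomp G U W k A B C D) :
    Disjoint (partsUnion k A) (partsUnion k C) := by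
  simp only [partsUnion, disjoint_iUnion₂_left, disjoint_iUnion₂_right]
  exact fun i hi j hj => (h.disjU j hj i hi).2

lemma disjoint_partsUnion_B_D (h : IsChainDecomp G U W k A B C D) :
    Disjoint (partsUnion k B) (partsUnion k D) := by
  simp only [partsUnion, disjoint_iUnion₂_left, disjoint_iUnion₂_right]
  exact fun i hi j hj => (h.disjW j hj i hi).2

lemma notMem_partsUnion_B (h : IsChainDecomp G U W k A B C D) (hv₁ : v₁ ∈ D 1) :
    v₁ ∉ partsUnion k B :=
  fun hv => disjoint_left.1 h.disjoint_partsUnion_B_D hv (subset_partsUnion h.one_mem hv₁)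

lemma disjoint_sides (h : IsChainDecomp G U W k A B C D) (hUW : Disjoint U W) (hv₁ : v₁ ∈ D 1) :
    Disjoint (partsUnion k A) (partsUnion k B ∪ {v₁}) :=
  hUW.mono h.partsUnion_A_subset <| union_subset h.partsUnion_B_subset <|
    singleton_subset_iff.2 (h.swap.partsUnion_B_subset (subset_partsUnion h.one_mem hv₁))

lemma adj_iff_of_mem_A_of_mem_D (h : IsChainDecomp G U W k A B C D) (hi : i ∈ Icc 1 k)
    (hj : j ∈ Icc 1 k) {x y : V} (hx : x ∈ A i) (hy : y ∈ D j) : G.Adj x y ↔ j < i := by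
  refine ⟨fun hxy => ?_, fun hji => (h.AD i hi j hj).1 hji hx hy⟩
  by_contra hij
  exact (h.AD i hi j hj).2 (not_lt.1 hij) hx hy hxy

/-- A vertex of `A i` lying in a later part `A' j` would be seen by `v₁` (if `i = 1`) or would
see all of `B (i - 1)` (if `i ≥ 2`) in `G'`, contradicting its behaviour in `G`. -/
lemma A_subset_of_adjAgreeOn (h : IsChainDecomp G U W k A B C D)
    (h' : IsChainDecomp G' U' W' k A' B' C' D') (hv₁ : v₁ ∈ D 1) (hv₁' : v₁ ∈ D' 1)
    (hA : partsUnion k A ⊆ partsUnion k A')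
    (hag : AdjAgreeOn G G' (partsUnion k A) (partsUnion k B ∪ {v₁})) (hi : i ∈ Icc 1 k)
    (hprev : ∀ j ∈ Ico 1 i, A' j ⊆ A j) (hB : 2 ≤ i → B (i - 1) ⊆ B' (i - 1)) :
    A i ⊆ A' i := by
  intro a ha
  have haA : a ∈ partsUnion k A := subset_partsUnion hi ha
  obtain ⟨j, hj, ha'⟩ := mem_partsUnion.1 (hA haA)
  rcases lt_trichotomy j i with hji | rfl | hij
  · exact absurd (hprev j ⟨hj.1, hji⟩ ha') (disjoint_left.1 ((h.disjU i hi j hj).1 hji.ne').1 ha)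
  · exact ha'
  · exfalso
    obtain rfl | hi2 := eq_or_lt_of_le hi.1
    · exact (h.AD 1 hi 1 hi).2 le_rfl ha hv₁
        ((hag haA (.inr rfl)).2 ((h'.AD j hj 1 hi).1 hij ha' hv₁'))
    · obtain ⟨b, hb, hab⟩ := h.A_nonnbr i hi2 (hij.trans_le hj.2) a ha
      have hi1 : i - 1 ∈ Icc 1 k := ⟨Nat.le_sub_one_of_lt hi2, (Nat.sub_le i 1).trans hi.2⟩
      exact hab ((hag haA (.inl (subset_partsUnion hi1 hb))).2
        ((h'.AB j hj (i - 1) hi1).2 (by omega) ha' (hB hi2 hb)))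

lemma B_subset_of_adjAgreeOn (h : IsChainDecomp G U W k A B C D)
    (h' : IsChainDecomp G' U' W' k A' B' C' D') (hB : partsUnion k B ⊆ partsUnion k B')
    (hag : AdjAgreeOn G G' (partsUnion k A) (partsUnion k B)) (hi : i ∈ Icc 1 k)
    (hA : A i ⊆ A' i) (hprev : ∀ j ∈ Ico 1 i, B' j ⊆ B j) : B i ⊆ B' i := by
  intro b hb
  obtain ⟨j, hj, hb'⟩ := mem_partsUnion.1 (hB (subset_partsUnion hi hb))
  rcases lt_trichotomy j i with hji | rfl | hij
  · exact absurd (hprev j ⟨hj.1, hji⟩ hb') (disjoint_left.1 ((h.disjW i hi j hj).1 hji.ne').1 hb)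
  · exact hb'
  · obtain ⟨a, ha, hab⟩ := h.B_nbr i hi b hb
    exact absurd ((hag (subset_partsUnion hi ha) (subset_partsUnion hi hb)).1 hab)
      ((h'.AB i hi j hj).1 hij (hA ha) hb')

lemma parts_eq_of_adjAgreeOn (h : IsChainDecomp G U W k A B C D)
    (h' : IsChainDecomp G' U' W' k A' B' C' D') (hv₁ : v₁ ∈ D 1) (hv₁' : v₁ ∈ D' 1)
    (hA : partsUnion k A = partsUnion k A') (hB : partsUnion k B = partsUnion k B')
    (hag : AdjAgreeOn G G' (partsUnion k A) (partsUnion k B ∪ {v₁})) :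
    ∀ i ∈ Icc 1 k, A i = A' i ∧ B i = B' i := by
  have hag' : AdjAgreeOn G' G (partsUnion k A') (partsUnion k B' ∪ {v₁}) := hA ▸ hB ▸ hag.symm
  intro i
  induction i using Nat.strong_induction_on with
  | _ i ih =>
    intro hi
    have hprev : ∀ j ∈ Ico 1 i, A j = A' j ∧ B j = B' j :=
      fun j hj => ih j hj.2 ⟨hj.1, hj.2.le.trans hi.2⟩
    have hBprev : 2 ≤ i → B (i - 1) = B' (i - 1) :=
      fun hi2 => (hprev (i - 1) ⟨by omega, by omega⟩).2
    have hAi : A i = A' i := subset_antisymm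
      (h.A_subset_of_adjAgreeOn h' hv₁ hv₁' hA.subset hag hi
        (fun j hj => (hprev j hj).1.ge) (fun hi2 => (hBprev hi2).le))
      (h'.A_subset_of_adjAgreeOn h hv₁' hv₁ hA.symm.subset hag' hi
        (fun j hj => (hprev j hj).1.le) (fun hi2 => (hBprev hi2).ge))
    refine ⟨hAi, subset_antisymm ?_ ?_⟩
    · exact h.B_subset_of_adjAgreeOn h' hB.subset (hag.mono subset_rfl subset_union_left) hi
        hAi.le (fun j hj => (hprev j hj).2.ge)
    · exact h'.B_subset_of_adjAgreeOn h hB.symm.subset (hag'.mono subset_rfl subset_union_left)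
        hi hAi.ge (fun j hj => (hprev j hj).2.le)

lemma adjAgreeOn_of_parts_eq (h : IsChainDecomp G U W k A B C D)
    (h' : IsChainDecomp G' U' W' k A' B' C' D')
    (hAB : ∀ i ∈ Icc 1 k, A i = A' i ∧ B i = B' i) (hCD : ∀ i ∈ Icc 1 k, C i = C' i ∧ D i = D' i)
    (hag₁ : AdjAgreeOn G G' (partsUnion k A) (partsUnion k B))
    (hag₂ : AdjAgreeOn G G' (partsUnion k C) (partsUnion k D)) : AdjAgreeOn G G' U W := by
  intro x hx y hy
  rw [← h.U_eq] at hx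
  rw [← h.W_eq] at hy
  rcases hx with hx | hx <;> rcases hy with hy | hy
  · exact hag₁ hx hy
  · obtain ⟨i, hi, hx⟩ := mem_partsUnion.1 hx
    obtain ⟨j, hj, hy⟩ := mem_partsUnion.1 hy
    rw [h.adj_iff_of_mem_A_of_mem_D hi hj hx hy,
      h'.adj_iff_of_mem_A_of_mem_D hi hj ((hAB i hi).1 ▸ hx) ((hCD j hj).2 ▸ hy)]
  · obtain ⟨i, hi, hx⟩ := mem_partsUnion.1 hx
    obtain ⟨j, hj, hy⟩ := mem_partsUnion.1 hy
    rw [h.swap.adj_iff_of_mem_A_of_mem_D hi hj hx hy,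
      h'.swap.adj_iff_of_mem_A_of_mem_D hi hj ((hCD i hi).1 ▸ hx) ((hAB j hj).2 ▸ hy)]
  · exact hag₂ hx hy

theorem eq_and_adjAgreeOn (h : IsChainDecomp G U W k A B C D)
    (h' : IsChainDecomp G' U' W' k A' B' C' D') (hv₁ : v₁ ∈ D 1) (hv₁' : v₁ ∈ D' 1)
    (hv₂ : v₂ ∈ B 1) (hv₂' : v₂ ∈ B' 1) (hA : partsUnion k A = partsUnion k A')
    (hB : partsUnion k B ∪ {v₁} = partsUnion k B' ∪ {v₁}) (hC : partsUnion k C = partsUnion k C')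
    (hD : partsUnion k D ∪ {v₂} = partsUnion k D' ∪ {v₂})
    (hag₁ : AdjAgreeOn G G' (partsUnion k A) (partsUnion k B ∪ {v₁}))
    (hag₂ : AdjAgreeOn G G' (partsUnion k C) (partsUnion k D ∪ {v₂})) :
    U = U' ∧ W = W' ∧ AdjAgreeOn G G' U W := by
  have hB' := eq_of_union_singleton_eq (h.notMem_partsUnion_B hv₁) (h'.notMem_partsUnion_B hv₁') hB
  have hD' :=
    eq_of_union_singleton_eq (h.swap.notMem_partsUnion_B hv₂) (h'.swap.notMem_partsUnion_B hv₂') hD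
  refine ⟨?_, ?_, h.adjAgreeOn_of_parts_eq h' (h.parts_eq_of_adjAgreeOn h' hv₁ hv₁' hA hB' hag₁)
    (h.swap.parts_eq_of_adjAgreeOn h'.swap hv₂ hv₂' hC hD' hag₂)
    (hag₁.mono subset_rfl subset_union_left) (hag₂.mono subset_rfl subset_union_left)⟩
  · rw [← h.U_eq, ← h'.U_eq]
    exact congrArg₂ (· ∪ ·) hA hC
  · rw [← h.W_eq, ← h'.W_eq]
    exact congrArg₂ (· ∪ ·) hB' hD'

/-- `B 1, …, B (k - 1)` are non-empty and pairwise disjoint. -/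
lemma le_card_add_one [Fintype V] (h : IsChainDecomp G U W k A B C D) :
    k ≤ Fintype.card V + 1 := by
  classical
  have hIcc : ∀ {i}, i ∈ Finset.Ico 1 k → i ∈ Icc 1 k := fun hi => by
    rw [Finset.mem_Ico] at hi
    exact ⟨hi.1, hi.2.le⟩
  have hdisj : (Finset.Ico 1 k : Set ℕ).PairwiseDisjoint fun i => (B i).toFinset :=
    fun i hi j hj hij => disjoint_toFinset.2 ((h.disjW i (hIcc hi) j (hIcc hj)).1 hij).1
  have hne : ∀ i ∈ Finset.Ico 1 k, ((B i).toFinset).Nonempty := fun i hi => by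
    rw [Finset.mem_Ico] at hi
    simpa using (h.nonempty_of_lt i hi.1 hi.2).2.1
  have := (Finset.card_le_card_biUnion hdisj hne).trans (Finset.card_le_univ _)
  rw [Nat.card_Ico] at this
  omega

lemma two_lt_ncard_side [Finite V] (h : IsChainDecomp G U W k A B C D) (hk : 2 ≤ k)
    (hUW : Disjoint U W) (hv₁ : v₁ ∈ D 1) :
    2 < (partsUnion k A ∪ (partsUnion k B ∪ {v₁})).ncard := by
  obtain ⟨⟨a, ha⟩, ⟨b, hb⟩, -⟩ := h.nonempty_of_lt 1 le_rfl hk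
  have haU : a ∈ U := h.partsUnion_A_subset (subset_partsUnion h.one_mem ha)
  have hbW : b ∈ W := h.partsUnion_B_subset (subset_partsUnion h.one_mem hb)
  have hv₁W : v₁ ∈ W := h.swap.partsUnion_B_subset (subset_partsUnion h.one_mem hv₁)
  refine (two_lt_ncard_iff (toFinite _)).2 ⟨a, b, v₁, .inl (subset_partsUnion h.one_mem ha),
    .inr (.inl (subset_partsUnion h.one_mem hb)), .inr (.inr rfl), ?_, ?_, ?_⟩
  · exact fun hab => disjoint_left.1 hUW haU (hab ▸ hbW)
  · exact fun hav => disjoint_left.1 hUW haU (hav ▸ hv₁W)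
  · exact fun hbv => disjoint_left.1 (h.disjW 1 h.one_mem 1 h.one_mem).2 hb (hbv ▸ hv₁)

/-- The markers are the only vertices counted twice. -/
lemma ncard_sides_le [Finite V] (h : IsChainDecomp G U W k A B C D) (hUW : Disjoint U W)
    (v₁ v₂ : V) :
    (partsUnion k A ∪ (partsUnion k B ∪ {v₁})).ncard +
      (partsUnion k C ∪ (partsUnion k D ∪ {v₂})).ncard ≤ (U ∪ W).ncard + 2 := by
  have hside : ∀ (X Y : Set V) (v : V), (X ∪ (Y ∪ {v})).ncard ≤ (X ∪ Y).ncard + 1 :=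
    fun X Y v => by
      rw [← union_assoc]
      exact (ncard_union_le _ _).trans_eq (by rw [ncard_singleton])
  have hdisj : Disjoint (partsUnion k A ∪ partsUnion k B) (partsUnion k C ∪ partsUnion k D) := by
    refine disjoint_union_left.2 ⟨disjoint_union_right.2 ⟨h.disjoint_partsUnion_A_C, ?_⟩,
      disjoint_union_right.2 ⟨?_, h.disjoint_partsUnion_B_D⟩⟩
    · exact hUW.mono h.partsUnion_A_subset h.swap.partsUnion_B_subset
    · exact hUW.symm.mono h.partsUnion_B_subset h.swap.partsUnion_A_subset
  have hunion : (partsUnion k A ∪ partsUnion k B) ∪ (partsUnion k C ∪ partsUnion k D) = U ∪ W := by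
    rw [← h.U_eq, ← h.W_eq, union_union_union_comm]
    rfl
  have := ncard_union_eq hdisj
  rw [hunion] at this
  linarith [hside (partsUnion k A) (partsUnion k B) v₁, hside (partsUnion k C) (partsUnion k D) v₂]

end IsChainDecomp

/-- The two extra vertices of a chain node are absorbed by the affine bound because the sides of
a chain node have at least three vertices; smaller graphs are leaves or unions. -/
def codeLengthBound (m : ℕ) : ℕ := if m ≤ 2 then 3 * m - 2 else 9 * m - 20

lemma codeLengthBound_one : codeLengthBound 1 = 1 := rfl

lemma codeLengthBound_le (m : ℕ) : codeLengthBound m ≤ 9 * m := by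
  unfold codeLengthBound; split_ifs <;> omega

lemma codeLengthBound_union {a b m : ℕ} (ha : 1 ≤ a) (hb : 1 ≤ b) (hm : a + b ≤ m) :
    codeLengthBound a + codeLengthBound b + 2 ≤ codeLengthBound m := by
  unfold codeLengthBound; split_ifs <;> omega

lemma codeLengthBound_chain {a b m : ℕ} (ha : 2 < a) (hb : 2 < b) (hm : a + b ≤ m + 2) :
    codeLengthBound a + codeLengthBound b + 2 ≤ codeLengthBound m := by
  unfold codeLengthBound; split_ifs <;> omega

section Encoding

variable [Fintype V]

abbrev Label (V : Type*) [Fintype V] : Type _ :=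
  (V × Bool) ⊕ Unit ⊕ Unit ⊕ (Bool × V × V × Fin (Fintype.card V + 2))

abbrev Label.leaf (v : V) (left : Bool) : Label V := .inl (v, left)

abbrev Label.union : Label V := .inr (.inl ())

abbrev Label.compl : Label V := .inr (.inr (.inl ()))

abbrev Label.chain (right : Bool) (v₁ v₂ : V) (k : Fin (Fintype.card V + 2)) : Label V :=
  .inr (.inr (.inr (right, v₁, v₂, k)))

/-- `L` lists, in preorder, the labels of a decomposition tree of the bipartite graph `G` with
ordered parts `(U, W)`. -/
inductive Encodes : List (Label V) → SimpleGraph V → Set V → Set V → Prop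
  | leafLeft (G : SimpleGraph V) (v : V) : Encodes [.leaf v true] G {v} ∅
  | leafRight (G : SimpleGraph V) (v : V) : Encodes [.leaf v false] G ∅ {v}
  | union {l₁ l₂ : List (Label V)} {G : SimpleGraph V} {U₁ W₁ U₂ W₂ : Set V}
      (hG : AnticompleteTo G (U₁ ∪ W₁) (U₂ ∪ W₂)) (h₁ : Encodes l₁ G U₁ W₁)
      (h₂ : Encodes l₂ G U₂ W₂) : Encodes (.union :: (l₁ ++ l₂)) G (U₁ ∪ U₂) (W₁ ∪ W₂)
  | compl {l : List (Label V)} {G : SimpleGraph V} {U W : Set V}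
      (h : Encodes l (bipComplOn G U W) U W) : Encodes (.compl :: l) G U W
  | chainLeft {l₁ l₂ : List (Label V)} {G : SimpleGraph V} {U W : Set V}
      {k : Fin (Fintype.card V + 2)} {A B C D : ℕ → Set V} {v₁ v₂ : V}
      (hdec : IsChainDecomp G U W k A B C D) (hv₁ : v₁ ∈ D 1) (hv₂ : v₂ ∈ B 1)
      (h₁ : Encodes l₁ G (partsUnion k A) (partsUnion k B ∪ {v₁}))
      (h₂ : Encodes l₂ G (partsUnion k C) (partsUnion k D ∪ {v₂})) :
      Encodes (.chain false v₁ v₂ k :: (l₁ ++ l₂)) G U W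
  | chainRight {l₁ l₂ : List (Label V)} {G : SimpleGraph V} {U W : Set V}
      {k : Fin (Fintype.card V + 2)} {A B C D : ℕ → Set V} {v₁ v₂ : V}
      (hdec : IsChainDecomp G W U k A B C D) (hv₁ : v₁ ∈ D 1) (hv₂ : v₂ ∈ B 1)
      (h₁ : Encodes l₁ G (partsUnion k B ∪ {v₁}) (partsUnion k A))
      (h₂ : Encodes l₂ G (partsUnion k D ∪ {v₂}) (partsUnion k C)) :
      Encodes (.chain true v₁ v₂ k :: (l₁ ++ l₂)) G U W

namespace Encodes

variable {L L' T T' : List (Label V)} {G G' : SimpleGraph V} {U W U' W' : Set V}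

/-- Stated for `L ++ T` since codes are prefix-free: this is what splits `l₁ ++ l₂` in the
induction. -/
theorem eq_of_append_eq (h : Encodes L G U W) (h' : Encodes L' G' U' W')
    (hL : L ++ T = L' ++ T') : L = L' ∧ U = U' ∧ W = W' ∧ AdjAgreeOn G G' U W := by
  induction h generalizing L' T T' G' U' W' with
  | leafLeft G v =>
    cases h' with
    | leafLeft =>
      simp only [List.cons_append, List.nil_append, List.cons.injEq, Sum.inl.injEq,
        Prod.mk.injEq, and_true] at hL
      obtain ⟨rfl, -⟩ := hL
      exact ⟨rfl, rfl, rfl, fun _ _ _ hy => hy.elim⟩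
    | _ => simp at hL
  | leafRight G v =>
    cases h' with
    | leafRight =>
      simp only [List.cons_append, List.nil_append, List.cons.injEq, Sum.inl.injEq,
        Prod.mk.injEq, and_true] at hL
      obtain ⟨rfl, -⟩ := hL
      exact ⟨rfl, rfl, rfl, fun _ hx => hx.elim⟩
    | _ => simp at hL
  | union hG _ _ ih₁ ih₂ =>
    cases h' with
    | union hG' h₁' h₂' =>
      simp only [List.cons_append, List.cons.injEq, List.append_assoc, true_and] at hL
      obtain ⟨rfl, rfl, rfl, ag₁⟩ := ih₁ h₁' hL
      obtain ⟨rfl, rfl, rfl, ag₂⟩ := ih₂ h₂' (List.append_cancel_left hL)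
      exact ⟨rfl, rfl, rfl, ag₁.union ag₂ hG hG'⟩
    | _ => simp at hL
  | compl _ ih =>
    cases h' with
    | compl h' =>
      simp only [List.cons_append, List.cons.injEq, true_and] at hL
      obtain ⟨rfl, rfl, rfl, ag⟩ := ih h' hL
      exact ⟨rfl, rfl, rfl, ag.of_bipComplOn⟩
    | _ => simp at hL
  | chainLeft hdec hv₁ hv₂ _ _ ih₁ ih₂ =>
    cases h' with
    | chainLeft hdec' hv₁' hv₂' h₁' h₂' =>
      simp only [List.cons_append, List.cons.injEq, Sum.inr.injEq, Prod.mk.injEq, true_and,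
        List.append_assoc] at hL
      obtain ⟨⟨rfl, rfl, rfl⟩, hL⟩ := hL
      obtain ⟨rfl, hA, hB, ag₁⟩ := ih₁ h₁' hL
      obtain ⟨rfl, hC, hD, ag₂⟩ := ih₂ h₂' (List.append_cancel_left hL)
      obtain ⟨rfl, rfl, ag⟩ := hdec.eq_and_adjAgreeOn hdec' hv₁ hv₁' hv₂ hv₂' hA hB hC hD ag₁ ag₂
      exact ⟨rfl, rfl, rfl, ag⟩
    | _ => simp at hL
  | chainRight hdec hv₁ hv₂ _ _ ih₁ ih₂ =>
    cases h' with
    | chainRight hdec' hv₁' hv₂' h₁' h₂' =>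
      simp only [List.cons_append, List.cons.injEq, Sum.inr.injEq, Prod.mk.injEq, true_and,
        List.append_assoc] at hL
      obtain ⟨⟨rfl, rfl, rfl⟩, hL⟩ := hL
      obtain ⟨rfl, hB, hA, ag₁⟩ := ih₁ h₁' hL
      obtain ⟨rfl, hD, hC, ag₂⟩ := ih₂ h₂' (List.append_cancel_left hL)
      obtain ⟨rfl, rfl, ag⟩ :=
        hdec.eq_and_adjAgreeOn hdec' hv₁ hv₁' hv₂ hv₂' hA hB hC hD ag₁.swap ag₂.swap
      exact ⟨rfl, rfl, rfl, ag.swap⟩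
    | _ => simp at hL

theorem unique (h : Encodes L G U W) (h' : Encodes L G' U' W') :
    U = U' ∧ W = W' ∧ AdjAgreeOn G G' U W :=
  (h.eq_of_append_eq h' (T := []) (T' := []) rfl).2

end Encodes

end Encoding

section Existence

variable [Fintype V] {G : SimpleGraph V}

/-- The `+ 1` leaves room for a `Label.compl` in front. -/
lemma exists_encodes_union {U₁ W₁ U₂ W₂ : Set V} (hd : Disjoint (U₁ ∪ W₁) (U₂ ∪ W₂))
    (hne₁ : (U₁ ∪ W₁).Nonempty) (hne₂ : (U₂ ∪ W₂).Nonempty)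
    (hG : AnticompleteTo G (U₁ ∪ W₁) (U₂ ∪ W₂))
    (h₁ : ∃ L, Encodes L G U₁ W₁ ∧ L.length ≤ codeLengthBound (U₁ ∪ W₁).ncard)
    (h₂ : ∃ L, Encodes L G U₂ W₂ ∧ L.length ≤ codeLengthBound (U₂ ∪ W₂).ncard) :
    ∃ L, Encodes L G (U₁ ∪ U₂) (W₁ ∪ W₂) ∧
      L.length + 1 ≤ codeLengthBound ((U₁ ∪ U₂) ∪ (W₁ ∪ W₂)).ncard := by
  obtain ⟨L₁, hL₁, hlen₁⟩ := h₁
  obtain ⟨L₂, hL₂, hlen₂⟩ := h₂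
  have hm : (U₁ ∪ W₁).ncard + (U₂ ∪ W₂).ncard = ((U₁ ∪ U₂) ∪ (W₁ ∪ W₂)).ncard := by
    rw [union_union_union_comm, ncard_union_eq hd]
  have := codeLengthBound_union ((ncard_pos (toFinite _)).2 hne₁) ((ncard_pos (toFinite _)).2 hne₂)
    hm.le
  refine ⟨_, .union hG hL₁ hL₂, ?_⟩
  simp only [List.length_cons, List.length_append]
  omega

lemma exists_encodes_chainLeft {U W : Set V} {k : ℕ} {A B C D : ℕ → Set V} {v₁ v₂ : V}
    (hk : 2 ≤ k) (hdec : IsChainDecomp G U W k A B C D) (hv₁ : v₁ ∈ D 1) (hv₂ : v₂ ∈ B 1)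
    (hUW : Disjoint U W)
    (h₁ : ∃ L, Encodes L G (partsUnion k A) (partsUnion k B ∪ {v₁}) ∧
      L.length ≤ codeLengthBound (partsUnion k A ∪ (partsUnion k B ∪ {v₁})).ncard)
    (h₂ : ∃ L, Encodes L G (partsUnion k C) (partsUnion k D ∪ {v₂}) ∧
      L.length ≤ codeLengthBound (partsUnion k C ∪ (partsUnion k D ∪ {v₂})).ncard) :
    ∃ L, Encodes L G U W ∧ L.length + 1 ≤ codeLengthBound (U ∪ W).ncard := by
  obtain ⟨L₁, hL₁, hlen₁⟩ := h₁
  obtain ⟨L₂, hL₂, hlen₂⟩ := h₂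
  have := codeLengthBound_chain (hdec.two_lt_ncard_side hk hUW hv₁)
    (hdec.swap.two_lt_ncard_side hk hUW hv₂) (hdec.ncard_sides_le hUW v₁ v₂)
  let k' : Fin (Fintype.card V + 2) := ⟨k, by have := hdec.le_card_add_one; omega⟩
  refine ⟨_, .chainLeft (k := k') hdec hv₁ hv₂ hL₁ hL₂, ?_⟩
  simp only [List.length_cons, List.length_append]
  omega

lemma exists_encodes_chainRight {U W : Set V} {k : ℕ} {A B C D : ℕ → Set V} {v₁ v₂ : V}
    (hk : 2 ≤ k) (hdec : IsChainDecomp G W U k A B C D) (hv₁ : v₁ ∈ D 1) (hv₂ : v₂ ∈ B 1)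
    (hUW : Disjoint U W)
    (h₁ : ∃ L, Encodes L G (partsUnion k B ∪ {v₁}) (partsUnion k A) ∧
      L.length ≤ codeLengthBound ((partsUnion k B ∪ {v₁}) ∪ partsUnion k A).ncard)
    (h₂ : ∃ L, Encodes L G (partsUnion k D ∪ {v₂}) (partsUnion k C) ∧
      L.length ≤ codeLengthBound ((partsUnion k D ∪ {v₂}) ∪ partsUnion k C).ncard) :
    ∃ L, Encodes L G U W ∧ L.length + 1 ≤ codeLengthBound (U ∪ W).ncard := by
  obtain ⟨L₁, hL₁, hlen₁⟩ := h₁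
  obtain ⟨L₂, hL₂, hlen₂⟩ := h₂
  rw [union_comm] at hlen₁ hlen₂
  have := codeLengthBound_chain (hdec.two_lt_ncard_side hk hUW.symm hv₁)
    (hdec.swap.two_lt_ncard_side hk hUW.symm hv₂)
    (union_comm U W ▸ hdec.ncard_sides_le hUW.symm v₁ v₂)
  let k' : Fin (Fintype.card V + 2) := ⟨k, by have := hdec.le_card_add_one; omega⟩
  refine ⟨_, .chainRight (k := k') hdec hv₁ hv₂ hL₁ hL₂, ?_⟩
  simp only [List.length_cons, List.length_append]
  omega

theorem ChainDecomposable.exists_encodes {U W : Set V} (h : ChainDecomposable G U W)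
    (hUW : Disjoint U W) :
    ∃ L, Encodes L G U W ∧ L.length ≤ codeLengthBound (U ∪ W).ncard := by
  induction h with
  | single G U W v h =>
    rcases subset_singleton_iff_eq.1 (h ▸ subset_union_left : U ⊆ {v}) with rfl | rfl <;>
      rcases subset_singleton_iff_eq.1 (h ▸ subset_union_right : W ⊆ {v}) with rfl | rfl
    · simp at h
    · exact ⟨_, .leafRight G v, by simp [codeLengthBound_one]⟩
    · exact ⟨_, .leafLeft G v, by simp [codeLengthBound_one]⟩
    · simp at hUW
  | union G U₁ W₁ U₂ W₂ hd hne₁ hne₂ hG _ _ ih₁ ih₂ =>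
    obtain ⟨L, hL, hlen⟩ := exists_encodes_union hd hne₁ hne₂ hG
      (ih₁ (hUW.mono subset_union_left subset_union_left))
      (ih₂ (hUW.mono subset_union_right subset_union_right))
    exact ⟨L, hL, by omega⟩
  | counion G U₁ W₁ U₂ W₂ hd hne₁ hne₂ hG _ _ ih₁ ih₂ =>
    obtain ⟨L, hL, hlen⟩ := exists_encodes_union hd hne₁ hne₂ hG
      (ih₁ (hUW.mono subset_union_left subset_union_left))
      (ih₂ (hUW.mono subset_union_right subset_union_right))
    exact ⟨_, .compl hL, hlen⟩
  | chainLeft G U W k A B C D v₁ v₂ hk hdec hv₁ hv₂ _ _ ih₁ ih₂ =>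
    obtain ⟨L, hL, hlen⟩ := exists_encodes_chainLeft hk hdec hv₁ hv₂ hUW
      (ih₁ (hdec.disjoint_sides hUW hv₁)) (ih₂ (hdec.swap.disjoint_sides hUW hv₂))
    exact ⟨L, hL, by omega⟩
  | chainRight G U W k A B C D v₁ v₂ hk hdec hv₁ hv₂ _ _ ih₁ ih₂ =>
    obtain ⟨L, hL, hlen⟩ := exists_encodes_chainRight hk hdec hv₁ hv₂ hUW
      (ih₁ (hdec.disjoint_sides hUW.symm hv₁).symm)
      (ih₂ (hdec.swap.disjoint_sides hUW.symm hv₂).symm)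
    exact ⟨L, hL, by omega⟩
  | cochainLeft G U W k A B C D v₁ v₂ hk hdec hv₁ hv₂ _ _ ih₁ ih₂ =>
    obtain ⟨L, hL, hlen⟩ := exists_encodes_chainLeft hk hdec hv₁ hv₂ hUW
      (ih₁ (hdec.disjoint_sides hUW hv₁)) (ih₂ (hdec.swap.disjoint_sides hUW hv₂))
    exact ⟨_, .compl hL, hlen⟩
  | cochainRight G U W k A B C D v₁ v₂ hk hdec hv₁ hv₂ _ _ ih₁ ih₂ =>
    obtain ⟨L, hL, hlen⟩ := exists_encodes_chainRight hk hdec hv₁ hv₂ hUW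
      (ih₁ (hdec.disjoint_sides hUW.symm hv₁).symm)
      (ih₂ (hdec.swap.disjoint_sides hUW.symm hv₂).symm)
    exact ⟨_, .compl hL, hlen⟩

end Existence

/-- A list of length at most `N` is determined by its first `N` entries, each in `Option α`. -/
lemma ncard_le_of_injOn_list {α β : Type*} [Fintype α] {S : Set β} (f : β → List α) {N : ℕ}
    (hlen : ∀ p ∈ S, (f p).length ≤ N) (hinj : S.InjOn f) :
    S.ncard ≤ (Fintype.card α + 1) ^ N := by
  let g : β → Fin N → Option α := fun p i => (f p)[(i : ℕ)]?
  have hg : S.InjOn g := by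
    intro p hp q hq hpq
    refine hinj hp hq (List.ext_getElem? fun i => ?_)
    by_cases hi : i < N
    · exact congrFun hpq ⟨i, hi⟩
    · rw [List.getElem?_eq_none (by linarith [hlen p hp]),
        List.getElem?_eq_none (by linarith [hlen q hq])]
  calc S.ncard ≤ (univ : Set (Fin N → Option α)).ncard :=
        ncard_le_ncard_of_injOn g (fun _ _ => mem_univ _) hg
    _ = (Fintype.card α + 1) ^ N := by
        rw [ncard_univ, Nat.card_eq_fintype_card, Fintype.card_fun, Fintype.card_option,
          Fintype.card_fin]

lemma card_label_add_one_le [Fintype V] (hV : 2 ≤ Fintype.card V) :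
    Fintype.card (Label V) + 1 ≤ Fintype.card V ^ 6 := by
  set c := Fintype.card V
  have hcard : Fintype.card (Label V) = 2 * c ^ 3 + 4 * c ^ 2 + 2 * c + 2 := by
    simp only [Label, Fintype.card_sum, Fintype.card_prod, Fintype.card_bool, Fintype.card_unit,
      Fintype.card_fin, c]
    ring
  have hc3 : 8 ≤ c ^ 3 := by simpa using Nat.pow_le_pow_left hV 3
  calc Fintype.card (Label V) + 1 ≤ 8 * c ^ 3 := by
        rw [hcard]
        nlinarith [Nat.mul_le_mul_right (c ^ 2) hV, Nat.mul_le_mul_right c hV]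
    _ ≤ c ^ 3 * c ^ 3 := Nat.mul_le_mul_right _ hc3
    _ = c ^ 6 := by ring

theorem ncard_chainDecomposable_le [Fintype V] (hV : 2 ≤ Fintype.card V) :
    {p : SimpleGraph V × Set V × Set V |
        IsBipartition p.1 p.2.1 p.2.2 ∧ ChainDecomposable p.1 p.2.1 p.2.2}.ncard ≤
      Fintype.card V ^ (54 * Fintype.card V) := by
  set S := {p : SimpleGraph V × Set V × Set V |
    IsBipartition p.1 p.2.1 p.2.2 ∧ ChainDecomposable p.1 p.2.1 p.2.2}
  have hcode : ∀ p ∈ S, ∃ L : List (Label V),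
      Encodes L p.1 p.2.1 p.2.2 ∧ L.length ≤ 9 * Fintype.card V := by
    rintro ⟨G, U, W⟩ ⟨hbip, hcd⟩
    obtain ⟨L, hL, hlen⟩ := hcd.exists_encodes hbip.disjoint
    refine ⟨L, hL, hlen.trans ?_⟩
    rw [hbip.union_eq, ncard_univ, Nat.card_eq_fintype_card]
    exact codeLengthBound_le _
  choose! code hcode using hcode
  have hinj : S.InjOn code := by
    rintro ⟨G, U, W⟩ hp ⟨G', U', W'⟩ hq heq
    obtain ⟨hU, hW, hag⟩ := (hcode _ hp).1.unique (heq ▸ (hcode _ hq).1)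
    dsimp only at hU hW hag
    subst hU hW
    rw [show G = G' from le_antisymm (hp.1.le_of_adjAgreeOn hag) (hq.1.le_of_adjAgreeOn hag.symm)]
  calc S.ncard ≤ (Fintype.card (Label V) + 1) ^ (9 * Fintype.card V) :=
        ncard_le_of_injOn_list code (fun p hp => (hcode p hp).2) hinj
    _ ≤ (Fintype.card V ^ 6) ^ (9 * Fintype.card V) :=
        Nat.pow_le_pow_left (card_label_add_one_le hV) _
    _ = Fintype.card V ^ (54 * Fintype.card V) := by rw [← pow_mul, ← mul_assoc]; norm_num

/-- There is a constant `C > 0` such that for every `n ≥ 2` the number of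
labelled bipartite graphs on `{1, …, n}`, given together with a bipartition of `{1, …, n}`
into two independent parts, that are chain-decomposable is at most `n ^ (C * n)`. -/
theorem upperBound_count_chainDecomposable :
    ∃ C : ℝ, 0 < C ∧ ∀ n : ℕ, 2 ≤ n →
      (({p : SimpleGraph (Fin n) × Set (Fin n) × Set (Fin n) |
          IsBipartition p.1 p.2.1 p.2.2 ∧ ChainDecomposable p.1 p.2.1 p.2.2}).ncard : ℝ) ≤
        (n : ℝ) ^ (C * n) := by
  refine ⟨54, by norm_num, fun n hn => ?_⟩
  have h := ncard_chainDecomposable_le (V := Fin n) (by rwa [Fintype.card_fin])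
  rw [Fintype.card_fin] at h
  calc _ ≤ ((n ^ (54 * n) : ℕ) : ℝ) := by exact_mod_cast h
    _ = (n : ℝ) ^ ((54 : ℝ) * n) := by
      rw [show (54 : ℝ) * n = ((54 * n : ℕ) : ℝ) by push_cast; rfl, Real.rpow_natCast]
      push_cast
      rfl
end

section
/- Let k ≥ 0 and let T be a k-decomposition tree of an n-element set. Then the number of leaves of T is at most 2^{n−1} if n ≤ k, and at most (n−k)·2^k if n ≥ k+1. -/
universe u

/-- A rooted binary tree in which every node `v` carries a finite set label `S(v)`
and every internal node has exactly two children. -/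
inductive STree (α : Type u) : Type u where
  | leaf (s : Finset α) : STree α
  | node (s : Finset α) (l r : STree α) : STree α

namespace STree

/-- The label `S(v)` of the root of the (sub)tree. -/
def label {α : Type u} : STree α → Finset α
  | leaf s => s
  | node s _ _ => s

/-- The number of leaves of the tree. -/
def numLeaves {α : Type u} : STree α → ℕ
  | leaf _ => 1
  | node _ l r => l.numLeaves + r.numLeaves

/-- The total number of nodes of the tree. -/
def numNodes {α : Type u} : STree α → ℕ
  | leaf _ => 1
  | node _ l r => l.numNodes + r.numNodes + 1

/-- The local conditions of a `k`-decomposition tree: leaves are exactly the nodes whose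
label is a singleton, and whenever `v₁, v₂` are the two children of `v` we have
`S(v₁) ∪ S(v₂) = S(v)`, `|S(v)| ≤ |S(v₁)| + |S(v₂)| ≤ |S(v)| + k`, and each of
`S(v₁) ∖ S(v₂)` and `S(v₂) ∖ S(v₁)` is non-empty. -/
def Valid {α : Type u} [DecidableEq α] (k : ℕ) : STree α → Prop
  | leaf s => s.card = 1
  | node s l r =>
      s.card ≠ 1 ∧
      l.label ∪ r.label = s ∧
      s.card ≤ l.label.card + r.label.card ∧
      l.label.card + r.label.card ≤ s.card + k ∧
      (l.label \ r.label).Nonempty ∧ (r.label \ l.label).Nonempty ∧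
      l.Valid k ∧ r.Valid k

/-- No node of the tree has label `A`. -/
def NoLabel {α : Type u} (A : Finset α) : STree α → Prop
  | leaf s => s ≠ A
  | node s l r => s ≠ A ∧ l.NoLabel A ∧ r.NoLabel A

/-- No node other than the root has label `A`. -/
def NoLabelBelowRoot {α : Type u} (A : Finset α) : STree α → Prop
  | leaf _ => True
  | node _ l r => l.NoLabel A ∧ r.NoLabel A

end STree

/-- `T` is a `k`-decomposition tree of the finite set `A`:  the root (and only the root)
is labelled by `A`, leaves are exactly the nodes labelled by singletons, and the labels of
the two children of any internal node `v` cover `S(v)`, satisfy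
`|S(v)| ≤ |S(v₁)| + |S(v₂)| ≤ |S(v)| + k`, and each has a private element. -/
def IsKDecompTree {α : Type u} [DecidableEq α] (k : ℕ) (A : Finset α) (T : STree α) : Prop :=
  T.label = A ∧ T.Valid k ∧ T.NoLabelBelowRoot A

/-! Write `f n` for the claimed bound (`decompBound k n`). By induction on the tree, a node
labelled by an `n`-set has at most `f n` leaves below it: its children carry labels of sizes
`a, b` with `1 ≤ a, b < n` (each child misses the private element of the other) and
`a + b ≤ n + k`, and `f a + f b ≤ f n` in this range. For `n ≤ k` this follows from
`f m ≤ 2 ^ (m - 1)`; for `n > k` from `f m ≤ max 1 (m - k) * 2 ^ k`, except when `a, b ≤ k`,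
where again `2 ^ (a - 1) + 2 ^ (b - 1) ≤ 2 ^ k`. -/

def decompBound (k n : ℕ) : ℕ := if n ≤ k then 2 ^ (n - 1) else (n - k) * 2 ^ k

lemma decompBound_of_le {k n : ℕ} (h : n ≤ k) : decompBound k n = 2 ^ (n - 1) := if_pos h

lemma decompBound_of_lt {k n : ℕ} (h : k < n) : decompBound k n = (n - k) * 2 ^ k :=
  if_neg (Nat.not_le.2 h)

lemma decompBound_one (k : ℕ) : decompBound k 1 = 1 := by
  unfold decompBound
  split_ifs with h
  · rfl
  · simp [show k = 0 by omega]

lemma decompBound_le_two_pow (k n : ℕ) : decompBound k n ≤ 2 ^ (n - 1) := by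
  rcases le_or_gt n k with h | h
  · exact (decompBound_of_le h).le
  · rw [decompBound_of_lt h, show n - 1 = n - k - 1 + k by omega, pow_add]
    have hlin : n - k - 1 < 2 ^ (n - k - 1) := Nat.lt_two_pow_self
    exact Nat.mul_le_mul_right _ (by omega)

lemma decompBound_le_max_mul (k n : ℕ) : decompBound k n ≤ max 1 (n - k) * 2 ^ k := by
  rcases le_or_gt n k with h | h
  · rw [decompBound_of_le h]
    calc 2 ^ (n - 1) ≤ 2 ^ k := Nat.pow_le_pow_right two_pos (by omega)
      _ ≤ max 1 (n - k) * 2 ^ k := Nat.le_mul_of_pos_left _ (by omega)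
  · rw [decompBound_of_lt h]
    exact Nat.mul_le_mul_right _ (le_max_right _ _)

lemma two_pow_pred_add_two_pow_pred_le {a b c : ℕ} (ha : a ≤ c) (hb : b ≤ c) (hc : 0 < c) :
    2 ^ (a - 1) + 2 ^ (b - 1) ≤ 2 ^ c := by
  have hac : 2 ^ (a - 1) ≤ 2 ^ (c - 1) := Nat.pow_le_pow_right two_pos (by omega)
  have hbc : 2 ^ (b - 1) ≤ 2 ^ (c - 1) := Nat.pow_le_pow_right two_pos (by omega)
  have hdouble : 2 ^ c = 2 ^ (c - 1) + 2 ^ (c - 1) := by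
    rw [← two_mul, ← pow_succ', Nat.sub_add_cancel hc]
  omega

lemma decompBound_add_le {k n a b : ℕ} (ha : 0 < a) (hb : 0 < b) (han : a < n) (hbn : b < n)
    (hab : a + b ≤ n + k) : decompBound k a + decompBound k b ≤ decompBound k n := by
  have hpow := add_le_add (decompBound_le_two_pow k a) (decompBound_le_two_pow k b)
  rcases le_or_gt n k with hnk | hkn
  · rw [decompBound_of_le hnk]
    exact hpow.trans (two_pow_pred_add_two_pow_pred_le (by omega) (by omega) (by omega))
  rw [decompBound_of_lt hkn]
  by_cases hsmall : a ≤ k ∧ b ≤ k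
  · calc decompBound k a + decompBound k b
        ≤ 2 ^ k := hpow.trans (two_pow_pred_add_two_pow_pred_le hsmall.1 hsmall.2 (by omega))
      _ ≤ (n - k) * 2 ^ k := Nat.le_mul_of_pos_left _ (by omega)
  · calc decompBound k a + decompBound k b
        ≤ (max 1 (a - k) + max 1 (b - k)) * 2 ^ k := by
          rw [add_mul]
          exact add_le_add (decompBound_le_max_mul k a) (decompBound_le_max_mul k b)
      _ ≤ (n - k) * 2 ^ k := Nat.mul_le_mul_right _ (by omega)

lemma Finset.card_lt_card_of_union_eq {α : Type u} [DecidableEq α] {s t u : Finset α}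
    (hst : s ∪ t = u) (ht : (t \ s).Nonempty) : s.card < u.card := by
  obtain ⟨x, hx⟩ := ht
  rw [Finset.mem_sdiff] at hx
  refine Finset.card_lt_card ((Finset.ssubset_iff_of_subset ?_).2 ⟨x, ?_, hx.2⟩)
  · exact hst ▸ Finset.subset_union_left
  · exact hst ▸ Finset.mem_union_right s hx.1

lemma STree.Valid.numLeaves_le_decompBound {α : Type u} [DecidableEq α] {k : ℕ} :
    ∀ {T : STree α}, T.Valid k → T.numLeaves ≤ decompBound k T.label.card
  | .leaf s, h => by simp [STree.numLeaves, STree.label, show s.card = 1 from h, decompBound_one]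
  | .node s l r, ⟨_, hunion, _, hsum, hl, hr, hvl, hvr⟩ => by
      have hunion' : r.label ∪ l.label = s := Finset.union_comm l.label r.label ▸ hunion
      calc l.numLeaves + r.numLeaves
          ≤ decompBound k l.label.card + decompBound k r.label.card :=
            add_le_add hvl.numLeaves_le_decompBound hvr.numLeaves_le_decompBound
        _ ≤ decompBound k s.card :=
            decompBound_add_le (hl.mono Finset.sdiff_subset).card_pos
              (hr.mono Finset.sdiff_subset).card_pos
              (Finset.card_lt_card_of_union_eq hunion hr)
              (Finset.card_lt_card_of_union_eq hunion' hl) hsum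

/-- If `T` is a `k`-decomposition tree of an `n`-element set, then the
number of leaves of `T` is at most `2 ^ (n - 1)` if `n ≤ k`, and at most
`(n - k) * 2 ^ k` if `n ≥ k + 1`. -/
theorem kDecompTree_numLeaves_le {α : Type u} [DecidableEq α] (k : ℕ) (A : Finset α)
    (T : STree α) (hT : IsKDecompTree k A T) :
    (A.card ≤ k → T.numLeaves ≤ 2 ^ (A.card - 1)) ∧
    (k + 1 ≤ A.card → T.numLeaves ≤ (A.card - k) * 2 ^ k) := by
  obtain ⟨rfl, hvalid, -⟩ := hT
  have hbound := hvalid.numLeaves_le_decompBound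
  exact ⟨fun hle => decompBound_of_le hle ▸ hbound, fun hlt => decompBound_of_lt hlt ▸ hbound⟩
end

section
/- Let k ≥ 0 and let T be a k-decomposition tree of an n-element set. Then the total number of nodes of T is at most 2^n − 1 if n ≤ k, and at most (n−k)·2^{k+1} − 1 if n ≥ k+1. -/
universe u

/-!
A binary tree with `L` leaves has `2L - 1` nodes, so it suffices to bound the number of
leaves below a node labelled by an `n`-set by `2 ^ (n - 1)` for `n ≤ k + 1` and by
`(n - k) * 2 ^ k` for `n ≥ k + 1`. This bound is superadditive along the decomposition
steps: the children have labels of sizes `a, b < n` with `a + b ≤ n + k`, and then the two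
bounds add up to at most the bound for `n`.
-/

def leafBound (k n : ℕ) : ℕ := if n ≤ k + 1 then 2 ^ (n - 1) else (n - k) * 2 ^ k

lemma leafBound_le (k n : ℕ) : leafBound k n ≤ (max n (k + 1) - k) * 2 ^ k := by
  unfold leafBound
  split_ifs with h
  · rw [show max n (k + 1) - k = 1 by omega, one_mul]
    exact Nat.pow_le_pow_right two_pos (by omega)
  · rw [max_eq_left (by omega)]

lemma leafBound_add_le {k a b n : ℕ} (ha : 1 ≤ a) (hb : 1 ≤ b) (han : a < n) (hbn : b < n)
    (habn : a + b ≤ n + k) : leafBound k a + leafBound k b ≤ leafBound k n := by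
  by_cases hn : n ≤ k + 1
  · simp only [leafBound, if_pos (show a ≤ k + 1 by omega), if_pos (show b ≤ k + 1 by omega),
      if_pos hn]
    calc 2 ^ (a - 1) + 2 ^ (b - 1) ≤ 2 ^ (n - 2) + 2 ^ (n - 2) :=
          add_le_add (Nat.pow_le_pow_right two_pos (by omega))
            (Nat.pow_le_pow_right two_pos (by omega))
      _ = 2 ^ (n - 1) := by rw [← two_mul, ← pow_succ']; congr 1; omega
  · calc leafBound k a + leafBound k b
        ≤ (max a (k + 1) - k) * 2 ^ k + (max b (k + 1) - k) * 2 ^ k :=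
          add_le_add (leafBound_le k a) (leafBound_le k b)
      _ = (max a (k + 1) - k + (max b (k + 1) - k)) * 2 ^ k := (add_mul _ _ _).symm
      _ ≤ (n - k) * 2 ^ k := Nat.mul_le_mul_right _ (by omega)
      _ = leafBound k n := by simp only [leafBound, if_neg hn]

lemma Finset.card_lt_card_union_left {α : Type u} [DecidableEq α] {s t : Finset α}
    (h : (t \ s).Nonempty) : s.card < (s ∪ t).card :=
  Finset.card_lt_card (left_lt_sup.2 (Finset.sdiff_nonempty.1 h))

namespace STree

variable {α : Type u}

lemma numNodes_add_one (T : STree α) : T.numNodes + 1 = 2 * T.numLeaves := by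
  induction T with
  | leaf s => rfl
  | node s l r ihl ihr => simp only [numNodes, numLeaves]; omega

variable [DecidableEq α] {k : ℕ}

lemma Valid.one_le_card_label {T : STree α} (hT : T.Valid k) : 1 ≤ T.label.card := by
  induction T with
  | leaf s => exact (hT : s.card = 1).ge
  | node s l r ihl _ =>
    obtain ⟨-, hs, -, -, -, -, hl, -⟩ := hT
    exact (ihl hl).trans (Finset.card_le_card (hs ▸ Finset.subset_union_left))

lemma Valid.numLeaves_le {T : STree α} (hT : T.Valid k) :
    T.numLeaves ≤ leafBound k T.label.card := by
  induction T with
  | leaf s =>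
    have hs : s.card = 1 := hT
    simp [numLeaves, label, leafBound, hs]
  | node s l r ihl ihr =>
    obtain ⟨-, hs, -, hup, hlr, hrl, hl, hr⟩ := hT
    subst hs
    have hln : l.label.card < (l.label ∪ r.label).card := Finset.card_lt_card_union_left hrl
    have hrn : r.label.card < (l.label ∪ r.label).card := by
      rw [Finset.union_comm]; exact Finset.card_lt_card_union_left hlr
    calc l.numLeaves + r.numLeaves
        ≤ leafBound k l.label.card + leafBound k r.label.card := add_le_add (ihl hl) (ihr hr)
      _ ≤ leafBound k (l.label ∪ r.label).card :=
          leafBound_add_le hl.one_le_card_label hr.one_le_card_label hln hrn hup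

end STree

/-- If `T` is a `k`-decomposition tree of an `n`-element set, then the
total number of nodes of `T` is at most `2 ^ n - 1` if `n ≤ k`, and at most
`(n - k) * 2 ^ (k + 1) - 1` if `n ≥ k + 1`. -/
theorem kDecompTree_numNodes_le {α : Type u} [DecidableEq α] (k : ℕ) (A : Finset α)
    (T : STree α) (hT : IsKDecompTree k A T) :
    (A.card ≤ k → T.numNodes ≤ 2 ^ A.card - 1) ∧
    (k + 1 ≤ A.card → T.numNodes ≤ (A.card - k) * 2 ^ (k + 1) - 1) := by
  obtain ⟨rfl, hval, -⟩ := hT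
  have hn : 1 ≤ T.label.card := hval.one_le_card_label
  have hleaves : T.numLeaves ≤ leafBound k T.label.card := hval.numLeaves_le
  have hnodes : T.numNodes + 1 = 2 * T.numLeaves := T.numNodes_add_one
  constructor
  · intro hk
    have hbound : 2 * leafBound k T.label.card = 2 ^ T.label.card := by
      rw [leafBound, if_pos (by omega), ← pow_succ']; congr 1; omega
    omega
  · intro hk
    have hbound : leafBound k T.label.card ≤ (T.label.card - k) * 2 ^ k := by
      simpa [max_eq_left hk] using leafBound_le k T.label.card
    have hpow : (T.label.card - k) * 2 ^ (k + 1) = 2 * ((T.label.card - k) * 2 ^ k) := by ring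
    omega
end
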